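/- There exists a constant C > 0 such that for every integer N ≥ 3 the following holds. Let ξ_j = π(2j−1)/(2(N−1)) for j = 1, …, N−1 and define the Chebyshev mesh of [0,1] by x_0 = 0, x_j = (1 − cos ξ_j)/2 for j = 1, …, N−1, and x_N = 1. For j = 1, …, N set |K_j| = x_j − x_{j−1} and d_{K_j} = sup_{x ∈ [x_{j−1}, x_j]} min(x, 1−x). Then Σ_{j=1}^N d_{K_j} / |K_j| ≤ C N². -/

import Mathlib

/-- Nodes of the one-dimensional Chebyshev mesh of `[0,1]`:
`x_0 = 0`, `x_j = (1 - cos(π(2j-1)/(2(N-1))))/2` for `1 ≤ j ≤ N-1`, `x_N = 1`. -/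
noncomputable def chebNode (N j : ℕ) : ℝ :=
  if j = 0 then 0 else if j = N then 1
  else (1 - Real.cos (Real.pi * (2 * (j : ℝ) - 1) / (2 * ((N : ℝ) - 1)))) / 2

/-!
Writing every node as `x_j = (1 - cos ξ_j)/2` with `ξ_0 = 0`, `ξ_N = π`, one has
`x_j - x_{j-1} = sin((ξ_{j-1}+ξ_j)/2) · sin((ξ_j-ξ_{j-1})/2)`, while the distance of the cell to
the boundary, at most `min(x_j, 1 - x_{j-1})`, is at most `sin((ξ_{j-1}+ξ_j)/2)`. Hence each
ratio is at most `1/sin((ξ_j-ξ_{j-1})/2) ≤ π/(ξ_j-ξ_{j-1}) ≤ 2(N-1)` by Jordan's inequality,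
and the sum is at most `2N²`.
-/

open Real

lemma sSup_image_min_one_sub_Icc_le {x y : ℝ} (hxy : x ≤ y) :
    sSup ((fun t => min t (1 - t)) '' Set.Icc x y) ≤ min y (1 - x) :=
  csSup_le ((Set.nonempty_Icc.2 hxy).image _) <| by
    rintro _ ⟨t, ht, rfl⟩
    exact min_le_min ht.2 (by linarith [ht.1])

lemma sin_half_sq (x : ℝ) : sin (x / 2) ^ 2 = (1 - cos x) / 2 := by
  rw [sin_sq, cos_sq, show 2 * (x / 2) = x by ring]; ring

lemma min_one_sub_cos_div_two_le_sin {a b : ℝ} (ha₀ : 0 ≤ a) (haπ : a ≤ π) (hb₀ : 0 ≤ b)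
    (hbπ : b ≤ π) :
    min ((1 - cos b) / 2) (1 - (1 - cos a) / 2) ≤ sin ((a + b) / 2) := by
  rcases le_total ((a + b) / 2) (π / 2) with hθ | hθ
  · have hsin : sin (b / 2) ≤ sin ((a + b) / 2) :=
      sin_le_sin_of_le_of_le_pi_div_two (by linarith [pi_pos]) hθ (by linarith)
    have hsin₀ : 0 ≤ sin (b / 2) := sin_nonneg_of_nonneg_of_le_pi (by linarith) (by linarith)
    calc min ((1 - cos b) / 2) (1 - (1 - cos a) / 2) ≤ sin (b / 2) ^ 2 :=
          (min_le_left _ _).trans (sin_half_sq b).ge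
      _ ≤ sin (b / 2) := by nlinarith [sin_le_one (b / 2)]
      _ ≤ _ := hsin
  · -- reflect `t ↦ π - t`, which swaps the two ends of `[0, 1]`
    have hsin : sin ((π - a) / 2) ≤ sin (π - (a + b) / 2) :=
      sin_le_sin_of_le_of_le_pi_div_two (by linarith) (by linarith) (by linarith)
    have hsin₀ : 0 ≤ sin ((π - a) / 2) :=
      sin_nonneg_of_nonneg_of_le_pi (by linarith) (by linarith)
    have hend : 1 - (1 - cos a) / 2 = sin ((π - a) / 2) ^ 2 := by
      rw [sin_half_sq, cos_pi_sub]; ring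
    calc min ((1 - cos b) / 2) (1 - (1 - cos a) / 2) ≤ sin ((π - a) / 2) ^ 2 :=
          (min_le_right _ _).trans hend.le
      _ ≤ sin ((π - a) / 2) := by nlinarith [sin_le_one ((π - a) / 2)]
      _ ≤ _ := by rwa [sin_pi_sub] at hsin

lemma one_sub_cos_div_two_sub (a b : ℝ) :
    (1 - cos b) / 2 - (1 - cos a) / 2 = sin ((a + b) / 2) * sin ((b - a) / 2) := by
  rw [show (b - a) / 2 = -((a - b) / 2) by ring, sin_neg]
  linarith [cos_sub_cos a b]

lemma sSup_image_min_one_sub_div_le {a b : ℝ} (ha₀ : 0 ≤ a) (hab : a < b) (hbπ : b ≤ π) :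
    sSup ((fun t => min t (1 - t)) '' Set.Icc ((1 - cos a) / 2) ((1 - cos b) / 2)) /
        ((1 - cos b) / 2 - (1 - cos a) / 2) ≤ π / (b - a) := by
  have hgap : (1 - cos a) / 2 < (1 - cos b) / 2 := by
    linarith [cos_lt_cos_of_nonneg_of_le_pi ha₀ hbπ hab]
  have hmid : 0 < sin ((a + b) / 2) := sin_pos_of_pos_of_lt_pi (by linarith) (by linarith)
  have hjordan : (b - a) / π ≤ sin ((b - a) / 2) := by
    have := mul_le_sin (x := (b - a) / 2) (by linarith) (by linarith)
    rwa [show 2 / π * ((b - a) / 2) = (b - a) / π by field_simp] at this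
  have hmin := min_one_sub_cos_div_two_le_sin ha₀ (by linarith) (by linarith) hbπ
  refine (div_le_div_of_nonneg_right (sSup_image_min_one_sub_Icc_le hgap.le)
    (by linarith)).trans ?_
  have hhalf : 0 < sin ((b - a) / 2) := (div_pos (by linarith) pi_pos).trans_le hjordan
  rw [one_sub_cos_div_two_sub, div_le_div_iff₀ (mul_pos hmid hhalf) (by linarith)]
  calc min ((1 - cos b) / 2) (1 - (1 - cos a) / 2) * (b - a)
      ≤ sin ((a + b) / 2) * (b - a) := mul_le_mul_of_nonneg_right hmin (by linarith)
    _ = π * (sin ((a + b) / 2) * ((b - a) / π)) := by field_simp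
    _ ≤ π * (sin ((a + b) / 2) * sin ((b - a) / 2)) := by gcongr

/-- The angles `ξ_j` of the statement, extended by `ξ_0 = 0` and `ξ_N = π`. -/
noncomputable def chebAngle (N j : ℕ) : ℝ :=
  if j = 0 then 0 else if j = N then π else π * (2 * j - 1) / (2 * (N - 1))

lemma chebNode_eq_one_sub_cos_chebAngle (N j : ℕ) :
    chebNode N j = (1 - cos (chebAngle N j)) / 2 := by
  unfold chebNode chebAngle
  split_ifs <;> simp

lemma chebAngle_nonneg {N j : ℕ} (hN : 2 ≤ N) : 0 ≤ chebAngle N j := by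
  have : (2 : ℝ) ≤ N := by exact_mod_cast hN
  unfold chebAngle
  split_ifs with h0
  · rfl
  · exact pi_pos.le
  · have : (1 : ℝ) ≤ j := by exact_mod_cast Nat.one_le_iff_ne_zero.2 h0
    exact div_nonneg (mul_nonneg pi_pos.le (by linarith)) (by linarith)

lemma chebAngle_le_pi {N j : ℕ} (hN : 2 ≤ N) (hj : j ≤ N) : chebAngle N j ≤ π := by
  unfold chebAngle
  split_ifs
  · exact pi_pos.le
  · rfl
  · have : (j : ℝ) + 1 ≤ N := by exact_mod_cast (show j + 1 ≤ N by omega)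
    have : (2 : ℝ) ≤ N := by exact_mod_cast hN
    rw [div_le_iff₀ (by linarith)]
    nlinarith [pi_pos]

lemma chebAngle_step {N j : ℕ} (hN : 2 ≤ N) (hj₁ : 1 ≤ j) (hj : j ≤ N) :
    π / (2 * (N - 1)) ≤ chebAngle N j - chebAngle N (j - 1) := by
  have hN' : (2 : ℝ) ≤ N := by exact_mod_cast hN
  have hpos : (0 : ℝ) < 2 * (N - 1) := by linarith
  unfold chebAngle
  rcases Nat.lt_or_ge j 2 with hj2 | hj2
  · obtain rfl : j = 1 := by omega
    norm_num [show 1 ≠ N by omega]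
  rcases eq_or_lt_of_le hj with rfl | hjN
  · rw [if_neg (by omega), if_pos rfl, if_neg (by omega), if_neg (by omega),
      Nat.cast_sub (by omega), Nat.cast_one]
    have : (j : ℝ) - 1 ≠ 0 := by linarith
    apply le_of_eq
    field_simp
    ring
  · rw [if_neg (by omega), if_neg (by omega), if_neg (by omega), if_neg (by omega),
      Nat.cast_sub (by omega), ← sub_div, div_le_div_iff_of_pos_right hpos]
    push_cast
    linarith [pi_pos]

/-- For the Chebyshev mesh, `Σ_j d_{K_j}/|K_j| ≤ C N²`, where
`|K_j| = x_j - x_{j-1}` and `d_{K_j} = sup_{x ∈ [x_{j-1},x_j]} min(x,1-x)`. -/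
theorem chebyshev_mesh_weighted_sum_bound :
    ∃ C : ℝ, 0 < C ∧ ∀ N : ℕ, 3 ≤ N →
      ∑ j ∈ Finset.Icc 1 N,
        (sSup ((fun t => min t (1 - t)) ''
            Set.Icc (chebNode N (j - 1)) (chebNode N j))) /
          (chebNode N j - chebNode N (j - 1)) ≤ C * N ^ 2 := by
  refine ⟨2, two_pos, fun N hN => ?_⟩
  have hN' : (3 : ℝ) ≤ N := by exact_mod_cast hN
  have hterm : ∀ j ∈ Finset.Icc 1 N,
      sSup ((fun t => min t (1 - t)) '' Set.Icc (chebNode N (j - 1)) (chebNode N j)) /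
        (chebNode N j - chebNode N (j - 1)) ≤ 2 * N := by
    intro j hj
    obtain ⟨hj₁, hjN⟩ := Finset.mem_Icc.1 hj
    have hstep := chebAngle_step (by omega) hj₁ hjN
    have hh : 0 < π / (2 * (N - 1)) := div_pos pi_pos (by linarith)
    simp only [chebNode_eq_one_sub_cos_chebAngle]
    calc _ ≤ π / (chebAngle N j - chebAngle N (j - 1)) :=
          sSup_image_min_one_sub_div_le (chebAngle_nonneg (by omega)) (by linarith)
            (chebAngle_le_pi (by omega) hjN)
      _ ≤ π / (π / (2 * (N - 1))) := by gcongr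
      _ ≤ 2 * N := by rw [div_div_cancel₀ pi_pos.ne']; linarith
  calc _ ≤ ∑ _j ∈ Finset.Icc 1 N, (2 * N : ℝ) := Finset.sum_le_sum hterm
    _ = 2 * N ^ 2 := by rw [Finset.sum_const, Nat.card_Icc, nsmul_eq_mul]; push_cast; ring
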